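/- Let n ≥ 2, let p ∈ (1, n] be a real number, let x0 ∈ ℝⁿ, and let Q : ℝⁿ → [0, ∞) be integrable on some ball B(x0, r0) and have finite mean oscillation at x0. Then there exists ε0 ∈ (0, min(r0, 1/e)) such that, setting F(ε) = ∫_{ε < |x−x0| < ε0} Q(x) / (|x−x0| · log(1/|x−x0|))ⁿ dx and I(ε) = ∫_ε^{ε0} dt / (t · log(1/t))^{n/p}, one has F(ε) / I(ε)^p → 0 as ε → 0⁺ (i.e. F(ε) = o(I(ε)^p)). -/

import Mathlib

/-!
Finite mean oscillation controls the growth of ball averages: passing from `B(x₀, r)` to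
`B(x₀, r/2)` raises the average of `Q` by at most `2ⁿ M`, so `Q` has average `O(k)` on
`B(x₀, ε₀ 2⁻ᵏ)`. On the dyadic shell `ε₀ 2⁻ᵏ⁻¹ ≤ |x - x₀| < ε₀ 2⁻ᵏ` the weight
`(|x - x₀| log (1/|x - x₀|))⁻ⁿ` is at most `(ε₀ 2⁻ᵏ⁻¹)⁻ⁿ ((k+1) log 2)⁻ⁿ`, so the shell contributes
`O(k¹⁻ⁿ) = O(1/k)` because `n ≥ 2`. The `O(log (1/ε))` shells between `ε` and `ε₀` then give
`F(ε) = O(log log (1/ε))`. On the other side `n/p ≥ 1` and `t log (1/t) ≤ 1` give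
`I(ε) ≥ log log (1/ε) - log log (1/ε₀)`, hence `F = O(I)` and `F / Iᵖ = O(I¹⁻ᵖ) → 0`.
-/

open MeasureTheory Metric Filter Topology Module Real Asymptotics

theorem setAverage_le_setAverage_add_of_subset {α : Type*} [MeasurableSpace α] {μ : Measure α}
    {s t : Set α} {f : α → ℝ} (hst : s ⊆ t) (hs : μ s ≠ 0) (ht : μ t ≠ ⊤)
    (hf : IntegrableOn f t μ) :
    ⨍ x in s, f x ∂μ ≤
      ⨍ x in t, f x ∂μ + μ.real t / μ.real s * ⨍ x in t, |f x - ⨍ y in t, f y ∂μ| ∂μ := by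
  set c := ⨍ y in t, f y ∂μ
  have hs_top : μ s ≠ ⊤ := ne_top_of_le_ne_top ht (measure_mono hst)
  have hs_pos : 0 < μ.real s := ENNReal.toReal_pos hs hs_top
  have hdev : IntegrableOn (fun x => f x - c) t μ := hf.sub (integrableOn_const ht)
  have hexcess : ∫ x in s, f x ∂μ - μ.real s * c ≤ μ.real t * ⨍ x in t, |f x - c| ∂μ :=
    calc ∫ x in s, f x ∂μ - μ.real s * c = ∫ x in s, (f x - c) ∂μ := by
          rw [integral_sub (hf.mono_set hst) (integrableOn_const hs_top), setIntegral_const,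
            smul_eq_mul]
      _ ≤ ∫ x in s, |f x - c| ∂μ :=
          integral_mono (hdev.mono_set hst) (hdev.mono_set hst).abs fun x => le_abs_self _
      _ ≤ ∫ x in t, |f x - c| ∂μ :=
          setIntegral_mono_set hdev.abs (.of_forall fun x => abs_nonneg _) hst.eventuallyLE
      _ = μ.real t * ⨍ x in t, |f x - c| ∂μ := (measure_smul_setAverage _ ht).symm
  rw [setAverage_eq, smul_eq_mul, div_mul_eq_mul_div, inv_mul_le_iff₀ hs_pos]
  rw [mul_add, mul_div_cancel₀ _ hs_pos.ne']
  linarith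

theorem setAverage_nonneg_of_nonneg {α : Type*} [MeasurableSpace α] {μ : Measure α} {s : Set α}
    {f : α → ℝ} (hf : ∀ x, 0 ≤ f x) : 0 ≤ ⨍ x in s, f x ∂μ := by
  rw [setAverage_eq, smul_eq_mul]
  exact mul_nonneg (inv_nonneg.mpr measureReal_nonneg) (integral_nonneg hf)

section AddHaar

variable {E : Type*} [NormedAddCommGroup E] [NormedSpace ℝ E] [FiniteDimensional ℝ E]
  [MeasurableSpace E] [BorelSpace E] {μ : Measure E} [μ.IsAddHaarMeasure]

theorem measureReal_ball_of_pos (x : E) {r : ℝ} (hr : 0 < r) :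
    μ.real (ball x r) = r ^ finrank ℝ E * μ.real (ball 0 1) := by
  rw [measureReal_def, Measure.addHaar_ball_of_pos μ x hr, ENNReal.toReal_mul,
    ENNReal.toReal_ofReal (by positivity), measureReal_def]

theorem setAverage_ball_half_le {f : E → ℝ} (x : E) {r : ℝ} (hr : 0 < r)
    (hf : IntegrableOn f (ball x r) μ) :
    ⨍ y in ball x (r / 2), f y ∂μ ≤ ⨍ y in ball x r, f y ∂μ +
      2 ^ finrank ℝ E * ⨍ y in ball x r, |f y - ⨍ z in ball x r, f z ∂μ| ∂μ := by
  have hratio : μ.real (ball x r) / μ.real (ball x (r / 2)) = 2 ^ finrank ℝ E := by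
    have hV : 0 < μ.real (ball (0 : E) 1) :=
      ENNReal.toReal_pos (measure_ball_pos μ 0 one_pos).ne' measure_ball_lt_top.ne
    rw [measureReal_ball_of_pos x hr, measureReal_ball_of_pos x (half_pos hr), div_pow]
    field_simp
  rw [← hratio]
  exact setAverage_le_setAverage_add_of_subset (ball_subset_ball (half_le_self hr.le))
    (measure_ball_pos μ x (half_pos hr)).ne' measure_ball_lt_top.ne hf

theorem setAverage_ball_div_two_pow_le {f : E → ℝ} {x : E} {R M : ℝ} (hR : 0 < R)
    (hf : IntegrableOn f (ball x R) μ)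
    (hM : ∀ r ∈ Set.Ioc 0 R, ⨍ y in ball x r, |f y - ⨍ z in ball x r, f z ∂μ| ∂μ ≤ M) (k : ℕ) :
    ⨍ y in ball x (R / 2 ^ k), f y ∂μ ≤ ⨍ y in ball x R, f y ∂μ + k * (2 ^ finrank ℝ E * M) := by
  induction k with
  | zero => simp
  | succ k ih =>
    have hr : 0 < R / 2 ^ k := by positivity
    have hrR : R / 2 ^ k ≤ R := div_le_self hR.le (one_le_pow₀ one_le_two)
    have hhalf := setAverage_ball_half_le x hr (hf.mono_set (ball_subset_ball hrR))
    rw [pow_succ, ← div_div]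
    push_cast
    nlinarith [hM _ ⟨hr, hrR⟩, pow_pos (two_pos : (0:ℝ) < 2) (finrank ℝ E)]

theorem setIntegral_ball_div_two_pow_le {f : E → ℝ} {x : E} {R M : ℝ} (hR : 0 < R)
    (hf0 : ∀ y, 0 ≤ f y) (hf : IntegrableOn f (ball x R) μ)
    (hM : ∀ r ∈ Set.Ioc 0 R, ⨍ y in ball x r, |f y - ⨍ z in ball x r, f z ∂μ| ∂μ ≤ M) (k : ℕ) :
    ∫ y in ball x (R / 2 ^ k), f y ∂μ ≤
      μ.real (ball 0 1) * (⨍ y in ball x R, f y ∂μ + 2 ^ finrank ℝ E * M) * (k + 1) *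
        (R / 2 ^ k) ^ finrank ℝ E := by
  have hM0 : 0 ≤ M := (setAverage_nonneg_of_nonneg fun y => abs_nonneg _).trans (hM R ⟨hR, le_rfl⟩)
  have hA0 : 0 ≤ ⨍ y in ball x R, f y ∂μ := setAverage_nonneg_of_nonneg hf0
  have hk : ⨍ y in ball x R, f y ∂μ + k * (2 ^ finrank ℝ E * M) ≤
      (⨍ y in ball x R, f y ∂μ + 2 ^ finrank ℝ E * M) * (k + 1) := by
    nlinarith [pow_pos (two_pos : (0:ℝ) < 2) (finrank ℝ E), (k.cast_nonneg : (0:ℝ) ≤ k)]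
  rw [← measure_smul_setAverage _ measure_ball_lt_top.ne, smul_eq_mul,
    measureReal_ball_of_pos x (by positivity)]
  calc (R / 2 ^ k) ^ finrank ℝ E * μ.real (ball 0 1) * ⨍ y in ball x (R / 2 ^ k), f y ∂μ
      ≤ (R / 2 ^ k) ^ finrank ℝ E * μ.real (ball 0 1) *
          ((⨍ y in ball x R, f y ∂μ + 2 ^ finrank ℝ E * M) * (k + 1)) := by
        gcongr
        exact (setAverage_ball_div_two_pow_le hR hf hM k).trans hk
    _ = _ := by ring

theorem eventually_exists_setIntegral_ball_div_two_pow_le {f : E → ℝ} {x : E} {r₀ : ℝ}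
    (hr₀ : 0 < r₀) (hf0 : ∀ y, 0 ≤ f y) (hf : IntegrableOn f (ball x r₀) μ)
    (hFMO : ∃ M : ℝ, ∀ᶠ r in 𝓝[>] (0 : ℝ),
      ⨍ y in ball x r, |f y - ⨍ z in ball x r, f z ∂μ| ∂μ ≤ M) :
    ∀ᶠ R in 𝓝[>] (0 : ℝ), ∃ C : ℝ, ∀ k : ℕ,
      ∫ y in ball x (R / 2 ^ k), f y ∂μ ≤ C * (k + 1) * (R / 2 ^ k) ^ finrank ℝ E := by
  obtain ⟨M, hM⟩ := hFMO
  obtain ⟨δ, hδ, hMδ⟩ := mem_nhdsGT_iff_exists_Ioo_subset.mp hM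
  filter_upwards [Ioo_mem_nhdsGT (lt_min hr₀ hδ)] with R hR
  have hRr₀ : R < r₀ := hR.2.trans_le (min_le_left _ _)
  have hRδ : R < δ := hR.2.trans_le (min_le_right _ _)
  exact ⟨_, setIntegral_ball_div_two_pow_le hR.1 hf0 (hf.mono_set (ball_subset_ball hRr₀.le))
    fun r hr => hMδ ⟨hr.1, hr.2.trans_lt hRδ⟩⟩

end AddHaar

theorem mul_log_two_le_log_one_div {t : ℝ} {k : ℕ} (ht : 0 < t) (htk : t ≤ (1 / 2) ^ k) :
    k * log 2 ≤ log (1 / t) := by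
  rw [← Real.log_pow]
  refine Real.log_le_log (by positivity) ?_
  rw [le_div_iff₀ ht]
  calc (2:ℝ) ^ k * t ≤ 2 ^ k * (1 / 2) ^ k := by gcongr
    _ = 1 := by rw [← mul_pow]; norm_num

theorem exists_one_div_two_pow_le_and_log_le {ε : ℝ} (hε : 0 < ε) (hε1 : ε ≤ 1 / exp 1) :
    ∃ K : ℕ, 1 / 2 ^ K ≤ ε ∧ log K ≤ log 3 + log (log (1 / ε)) := by
  have hL : 1 ≤ log (1 / ε) := by
    rw [Real.le_log_iff_exp_le (by positivity), le_div_iff₀ hε, ← le_div_iff₀' (exp_pos 1)]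
    exact hε1
  -- `log 2 > 1/2`, so `2 ^ K ≥ exp (K / 2) ≥ 1 / ε`.
  set K := ⌈2 * log (1 / ε)⌉₊
  have hK : 2 * log (1 / ε) ≤ K := Nat.le_ceil _
  refine ⟨K, ?_, ?_⟩
  · rw [div_le_iff₀ (by positivity), ← div_le_iff₀' hε]
    calc 1 / ε = exp (log (1 / ε)) := (exp_log (by positivity)).symm
      _ ≤ exp (K * log 2) := by
          gcongr
          nlinarith [Real.log_two_gt_d9]
      _ = 2 ^ K := by rw [exp_nat_mul, exp_log two_pos]
  · rw [← Real.log_mul (by norm_num) (by positivity)]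
    refine Real.log_le_log (by linarith) ?_
    linarith [Nat.ceil_lt_add_one (by linarith : 0 ≤ 2 * log (1 / ε))]

section DyadicShells

variable {α : Type*} [PseudoMetricSpace α] {Q : α → ℝ} {x₀ : α} {R : ℝ} {d : ℕ}

theorem div_dist_mul_log_pow_nonneg (hQ0 : ∀ x, 0 ≤ Q x) {x : α} (hx : dist x x₀ ≤ 1) :
    0 ≤ Q x / (dist x x₀ * log (1 / dist x x₀)) ^ d := by
  have : 0 ≤ log (1 / dist x x₀) := by
    rcases (dist_nonneg : 0 ≤ dist x x₀).eq_or_lt with h | h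
    · simp [← h]
    · exact Real.log_nonneg (by rwa [le_div_iff₀ h, one_mul])
  exact div_nonneg (hQ0 x) (by positivity)

theorem pow_le_dist_mul_log_pow_of_mem_shell (hR : 0 < R) (hR2 : R ≤ 1 / 2) {k : ℕ} {x : α}
    (hx : dist x x₀ ∈ Set.Ico (R / 2 ^ (k + 1)) (R / 2 ^ k)) :
    (R / 2 ^ (k + 1) * ((k + 1) * log 2)) ^ d ≤ (dist x x₀ * log (1 / dist x x₀)) ^ d := by
  have hdist : 0 < dist x x₀ := lt_of_lt_of_le (by positivity) hx.1
  have hlog : ((k + 1 : ℕ) : ℝ) * log 2 ≤ log (1 / dist x x₀) := by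
    refine mul_log_two_le_log_one_div hdist (hx.2.le.trans ?_)
    rw [pow_succ', div_pow, one_pow, div_eq_mul_one_div R]
    gcongr
  push_cast at hlog
  gcongr
  exact hx.1

variable [MeasurableSpace α] [OpensMeasurableSpace α] {μ : Measure α}

theorem integrableOn_div_dist_mul_log_pow_shell (hR : 0 < R) (hR2 : R ≤ 1 / 2)
    (hQ0 : ∀ x, 0 ≤ Q x) (hQ : IntegrableOn Q (ball x₀ R) μ) (k : ℕ) :
    IntegrableOn (fun x => Q x / (dist x x₀ * log (1 / dist x x₀)) ^ d)
      ((dist · x₀) ⁻¹' Set.Ico (R / 2 ^ (k + 1)) (R / 2 ^ k)) μ := by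
  have hsub : (dist · x₀) ⁻¹' Set.Ico (R / 2 ^ (k + 1)) (R / 2 ^ k) ⊆ ball x₀ R := fun x hx =>
    mem_ball.mpr (hx.2.trans_le (div_le_self hR.le (one_le_pow₀ one_le_two)))
  have hmeas : MeasurableSet ((dist · x₀) ⁻¹' Set.Ico (R / 2 ^ (k + 1)) (R / 2 ^ k)) :=
    (continuous_id.dist continuous_const).measurable measurableSet_Ico
  refine ((hQ.mono_set hsub).mul_const
    ((R / 2 ^ (k + 1) * ((k + 1) * log 2)) ^ d)⁻¹).mono' ?_ ?_
  · refine (hQ.mono_set hsub).aestronglyMeasurable.div₀ (Measurable.aestronglyMeasurable ?_)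
    fun_prop
  · rw [ae_restrict_iff' hmeas]
    refine .of_forall fun x hx => ?_
    have hx1 : dist x x₀ ≤ 1 := (mem_ball.mp (hsub hx)).le.trans (by linarith)
    rw [Real.norm_of_nonneg (div_dist_mul_log_pow_nonneg hQ0 hx1), ← div_eq_mul_inv]
    exact div_le_div_of_nonneg_left (hQ0 x) (by positivity)
      (pow_le_dist_mul_log_pow_of_mem_shell hR hR2 hx)

theorem nonneg_of_setIntegral_ball_le (hR : 0 < R) (hQ0 : ∀ x, 0 ≤ Q x) {C : ℝ}
    (hball : ∀ k : ℕ, ∫ x in ball x₀ (R / 2 ^ k), Q x ∂μ ≤ C * (k + 1) * (R / 2 ^ k) ^ d) :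
    0 ≤ C := by
  have := (setIntegral_nonneg measurableSet_ball fun x _ => hQ0 x).trans (hball 0)
  simp only [CharP.cast_eq_zero, zero_add, mul_one, pow_zero, div_one] at this
  exact nonneg_of_mul_nonneg_left this (by positivity)

theorem setIntegral_div_dist_mul_log_pow_shell_le (hd : 2 ≤ d) (hR : 0 < R) (hR2 : R ≤ 1 / 2)
    (hQ0 : ∀ x, 0 ≤ Q x) (hQ : IntegrableOn Q (ball x₀ R) μ) {C : ℝ}
    (hball : ∀ k : ℕ, ∫ x in ball x₀ (R / 2 ^ k), Q x ∂μ ≤ C * (k + 1) * (R / 2 ^ k) ^ d)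
    (k : ℕ) :
    ∫ x in (dist · x₀) ⁻¹' Set.Ico (R / 2 ^ (k + 1)) (R / 2 ^ k),
        Q x / (dist x x₀ * log (1 / dist x x₀)) ^ d ∂μ ≤ C * (2 / log 2) ^ d / (k + 1) := by
  set S := (dist · x₀) ⁻¹' Set.Ico (R / 2 ^ (k + 1)) (R / 2 ^ k)
  set w := (R / 2 ^ (k + 1) * ((k + 1) * log 2)) ^ d
  have hw : 0 < w := by positivity
  have hSball : S ⊆ ball x₀ (R / 2 ^ k) := fun x hx => mem_ball.mpr hx.2
  have hSmeas : MeasurableSet S :=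
    (continuous_id.dist continuous_const).measurable measurableSet_Ico
  have hQk : IntegrableOn Q (ball x₀ (R / 2 ^ k)) μ :=
    hQ.mono_set (ball_subset_ball (div_le_self hR.le (one_le_pow₀ one_le_two)))
  have hC : 0 ≤ C := nonneg_of_setIntegral_ball_le hR hQ0 hball
  have hpow : ((k : ℝ) + 1) / ((k : ℝ) + 1) ^ d ≤ 1 / ((k : ℝ) + 1) := by
    rw [div_le_div_iff₀ (by positivity) (by positivity), ← pow_two, one_mul]
    exact pow_le_pow_right₀ (by linarith [k.cast_nonneg (α := ℝ)]) hd
  calc ∫ x in S, Q x / (dist x x₀ * log (1 / dist x x₀)) ^ d ∂μ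
      ≤ ∫ x in S, Q x / w ∂μ := by
        refine setIntegral_mono_on
          (integrableOn_div_dist_mul_log_pow_shell hR hR2 hQ0 hQ k)
          ((hQk.mono_set hSball).div_const w) hSmeas fun x hx => ?_
        exact div_le_div_of_nonneg_left (hQ0 x) hw (pow_le_dist_mul_log_pow_of_mem_shell hR hR2 hx)
    _ = (∫ x in S, Q x ∂μ) / w := integral_div _ _
    _ ≤ (C * (k + 1) * (R / 2 ^ k) ^ d) / w := by
        gcongr
        exact (setIntegral_mono_set hQk (.of_forall fun x => hQ0 x) hSball.eventuallyLE).trans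
          (hball k)
    _ = C * (2 / log 2) ^ d * (((k : ℝ) + 1) / ((k : ℝ) + 1) ^ d) := by
        have hr : 0 < R / 2 ^ k := by positivity
        have hw_eq : w = (R / 2 ^ k) ^ d * (((k : ℝ) + 1) ^ d * (log 2 / 2) ^ d) := by
          simp only [w, pow_succ, ← div_div, ← mul_pow]
          ring
        have hlog2 : log 2 / 2 * (2 / log 2) = 1 := by field_simp
        rw [hw_eq]
        field_simp
        rw [mul_assoc, ← mul_pow, hlog2, one_pow, mul_one]
    _ ≤ C * (2 / log 2) ^ d * (1 / ((k : ℝ) + 1)) := by gcongr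
    _ = C * (2 / log 2) ^ d / (k + 1) := by ring

theorem setIntegral_div_dist_mul_log_pow_Ico_le (hd : 2 ≤ d) (hR : 0 < R) (hR2 : R ≤ 1 / 2)
    (hQ0 : ∀ x, 0 ≤ Q x) (hQ : IntegrableOn Q (ball x₀ R) μ) {C : ℝ}
    (hball : ∀ k : ℕ, ∫ x in ball x₀ (R / 2 ^ k), Q x ∂μ ≤ C * (k + 1) * (R / 2 ^ k) ^ d)
    (K : ℕ) :
    IntegrableOn (fun x => Q x / (dist x x₀ * log (1 / dist x x₀)) ^ d)
        ((dist · x₀) ⁻¹' Set.Ico (R / 2 ^ K) R) μ ∧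
      ∫ x in (dist · x₀) ⁻¹' Set.Ico (R / 2 ^ K) R,
        Q x / (dist x x₀ * log (1 / dist x x₀)) ^ d ∂μ ≤ C * (2 / log 2) ^ d * harmonic K := by
  induction K with
  | zero => simp
  | succ K ih =>
    have hshell := integrableOn_div_dist_mul_log_pow_shell (d := d) hR hR2 hQ0 hQ K
    have hunion : (dist · x₀) ⁻¹' Set.Ico (R / 2 ^ (K + 1)) R =
        (dist · x₀) ⁻¹' Set.Ico (R / 2 ^ (K + 1)) (R / 2 ^ K) ∪
          (dist · x₀) ⁻¹' Set.Ico (R / 2 ^ K) R := by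
      rw [← Set.preimage_union, Set.Ico_union_Ico_eq_Ico
        (div_le_div_of_nonneg_left hR.le (by positivity) (pow_le_pow_right₀ one_le_two K.le_succ))
        (div_le_self hR.le (one_le_pow₀ one_le_two))]
    have hdisj : Disjoint ((dist · x₀) ⁻¹' Set.Ico (R / 2 ^ (K + 1)) (R / 2 ^ K))
        ((dist · x₀) ⁻¹' Set.Ico (R / 2 ^ K) R) :=
      (Set.Ico_disjoint_Ico_same).preimage _
    rw [hunion, setIntegral_union hdisj
      ((continuous_id.dist continuous_const).measurable measurableSet_Ico) hshell ih.1]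
    refine ⟨hshell.union ih.1, ?_⟩
    calc _ ≤ C * (2 / log 2) ^ d / (K + 1) + C * (2 / log 2) ^ d * harmonic K :=
          add_le_add (setIntegral_div_dist_mul_log_pow_shell_le hd hR hR2 hQ0 hQ hball K) ih.2
      _ = C * (2 / log 2) ^ d * harmonic (K + 1) := by
          rw [harmonic_succ]
          push_cast
          ring

theorem setIntegral_div_dist_mul_log_pow_Ioo_nonneg (hQ0 : ∀ x, 0 ≤ Q x) (hR1 : R ≤ 1) (ε : ℝ) :
    0 ≤ ∫ x in (dist · x₀) ⁻¹' Set.Ioo ε R, Q x / (dist x x₀ * log (1 / dist x x₀)) ^ d ∂μ :=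
  setIntegral_nonneg ((continuous_id.dist continuous_const).measurable measurableSet_Ioo)
    fun _ hx => div_dist_mul_log_pow_nonneg hQ0 (hx.2.le.trans hR1)

theorem setIntegral_div_dist_mul_log_pow_Ioo_le (hd : 2 ≤ d) (hR : 0 < R) (hRe : R < 1 / exp 1)
    (hQ0 : ∀ x, 0 ≤ Q x) (hQ : IntegrableOn Q (ball x₀ R) μ) {C : ℝ}
    (hball : ∀ k : ℕ, ∫ x in ball x₀ (R / 2 ^ k), Q x ∂μ ≤ C * (k + 1) * (R / 2 ^ k) ^ d)
    {ε : ℝ} (hε : ε ∈ Set.Ioo 0 R) :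
    ∫ x in (dist · x₀) ⁻¹' Set.Ioo ε R, Q x / (dist x x₀ * log (1 / dist x x₀)) ^ d ∂μ ≤
      C * (2 / log 2) ^ d * (1 + log 3) + C * (2 / log 2) ^ d * log (log (1 / ε)) := by
  have hR2 : R ≤ 1 / 2 := hRe.le.trans (by gcongr; linarith [add_one_lt_exp one_ne_zero])
  obtain ⟨K, hK, hlogK⟩ := exists_one_div_two_pow_le_and_log_le hε.1 (hε.2.trans hRe).le
  have hKε : R / 2 ^ K ≤ ε := (div_le_div_of_nonneg_right (by linarith) (by positivity)).trans hK
  obtain ⟨hint, hle⟩ := setIntegral_div_dist_mul_log_pow_Ico_le hd hR hR2 hQ0 hQ hball K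
  have hnonneg : 0 ≤ᵐ[μ.restrict ((dist · x₀) ⁻¹' Set.Ico (R / 2 ^ K) R)]
      fun x => Q x / (dist x x₀ * log (1 / dist x x₀)) ^ d :=
    (ae_restrict_iff' ((continuous_id.dist continuous_const).measurable measurableSet_Ico)).mpr
      (.of_forall fun x hx => div_dist_mul_log_pow_nonneg hQ0 (hx.2.le.trans (by linarith)))
  have hsub : (dist · x₀) ⁻¹' Set.Ioo ε R ⊆ (dist · x₀) ⁻¹' Set.Ico (R / 2 ^ K) R :=
    Set.preimage_mono fun t ht => ⟨hKε.trans ht.1.le, ht.2⟩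
  have hC : 0 ≤ C * (2 / log 2) ^ d :=
    mul_nonneg (nonneg_of_setIntegral_ball_le hR hQ0 hball) (by positivity)
  calc _ ≤ _ := setIntegral_mono_set hint hnonneg hsub.eventuallyLE
    _ ≤ C * (2 / log 2) ^ d * harmonic K := hle
    _ ≤ C * (2 / log 2) ^ d * (1 + log K) :=
        mul_le_mul_of_nonneg_left (harmonic_le_one_add_log K) hC
    _ ≤ _ := by
        rw [← mul_add]
        exact mul_le_mul_of_nonneg_left (by linarith) hC

end DyadicShells

theorem hasDerivAt_neg_log_log_one_div {t : ℝ} (ht : 0 < t) (ht1 : t < 1) :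
    HasDerivAt (fun s => -log (log (1 / s))) (t * log (1 / t))⁻¹ t := by
  have hlog : 0 < log (1 / t) := Real.log_pos (by rwa [lt_div_iff₀ ht, one_mul])
  simp only [one_div] at hlog ⊢
  refine (((hasDerivAt_inv ht.ne').log (inv_ne_zero ht.ne')).log hlog.ne').neg.congr_deriv ?_
  field_simp

theorem mul_log_one_div_mem_Ioc {t : ℝ} (ht : 0 < t) (ht1 : t < 1) :
    t * log (1 / t) ∈ Set.Ioc 0 1 := by
  have hlog : 0 < log (1 / t) := Real.log_pos (by rwa [lt_div_iff₀ ht, one_mul])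
  refine ⟨by positivity, ?_⟩
  calc t * log (1 / t) ≤ t * (1 / t - 1) := by
        gcongr
        exact Real.log_le_sub_one_of_pos (by positivity)
    _ ≤ 1 := by rw [mul_sub, mul_one_div_cancel ht.ne']; linarith

theorem continuousOn_mul_log_one_div {ε R : ℝ} (hε : 0 < ε) :
    ContinuousOn (fun t => t * log (1 / t)) (Set.Icc ε R) := by
  have hpos : ∀ t ∈ Set.Icc ε R, 0 < t := fun t ht => hε.trans_le ht.1
  exact continuousOn_id.mul (ContinuousOn.log
    (continuousOn_const.div continuousOn_id fun t ht => (hpos t ht).ne')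
    fun t ht => (one_div_pos.mpr (hpos t ht)).ne')

theorem integral_inv_mul_log_one_div {ε R : ℝ} (hε : 0 < ε) (hεR : ε ≤ R) (hR1 : R < 1) :
    ∫ t in Set.Ioo ε R, (t * log (1 / t))⁻¹ = log (log (1 / ε)) - log (log (1 / R)) := by
  have hderiv : ∀ t ∈ Set.uIcc ε R,
      HasDerivAt (fun s => -log (log (1 / s))) (t * log (1 / t))⁻¹ t := fun t ht => by
    rw [Set.uIcc_of_le hεR] at ht
    exact hasDerivAt_neg_log_log_one_div (hε.trans_le ht.1) (ht.2.trans_lt hR1)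
  have hint : IntervalIntegrable (fun t => (t * log (1 / t))⁻¹) volume ε R :=
    ContinuousOn.intervalIntegrable_of_Icc hεR <| (continuousOn_mul_log_one_div hε).inv₀
      fun t ht => (mul_log_one_div_mem_Ioc (hε.trans_le ht.1) (ht.2.trans_lt hR1)).1.ne'
  rw [← integral_Ioc_eq_integral_Ioo, ← intervalIntegral.integral_of_le hεR,
    intervalIntegral.integral_eq_sub_of_hasDerivAt hderiv hint]
  ring

theorem log_log_one_div_sub_le_integral {ε R q : ℝ} (hε : 0 < ε) (hεR : ε ≤ R) (hR1 : R < 1)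
    (hq : 1 ≤ q) :
    log (log (1 / ε)) - log (log (1 / R)) ≤ ∫ t in Set.Ioo ε R, 1 / (t * log (1 / t)) ^ q := by
  have hmem : ∀ t ∈ Set.Icc ε R, t * log (1 / t) ∈ Set.Ioc 0 1 := fun t ht =>
    mul_log_one_div_mem_Ioc (hε.trans_le ht.1) (ht.2.trans_lt hR1)
  have hcont := continuousOn_mul_log_one_div (R := R) hε
  rw [← integral_inv_mul_log_one_div hε hεR hR1]
  refine setIntegral_mono_on ?_ ?_ measurableSet_Ioo fun t ht => ?_
  · exact ((hcont.inv₀ fun t ht => (hmem t ht).1.ne').integrableOn_Icc).mono_set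
      Set.Ioo_subset_Icc_self
  · refine (ContinuousOn.integrableOn_Icc ?_).mono_set Set.Ioo_subset_Icc_self
    exact continuousOn_const.div (hcont.rpow_const fun t ht => Or.inl (hmem t ht).1.ne')
      fun t ht => (Real.rpow_pos_of_pos (hmem t ht).1 q).ne'
  · obtain ⟨hpos, hle⟩ := hmem t (Set.Ioo_subset_Icc_self ht)
    rw [← Real.rpow_neg_one (t * log (1 / t)), one_div ((t * log (1 / t)) ^ q),
      ← Real.rpow_neg hpos.le]
    exact Real.rpow_le_rpow_of_exponent_ge hpos hle (by linarith)

theorem isBigO_of_le_const_add_mul {α : Type*} {l : Filter α} {f g : α → ℝ} {a b : ℝ}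
    (hg : Tendsto g l atTop) (hf0 : ∀ᶠ x in l, 0 ≤ f x) (hf : ∀ᶠ x in l, f x ≤ a + b * g x) :
    f =O[l] g := by
  refine IsBigO.of_bound (|a| + |b|) ?_
  filter_upwards [hf0, hf, hg.eventually_ge_atTop 1] with x hf0x hfx hgx
  rw [Real.norm_of_nonneg hf0x, Real.norm_of_nonneg (by linarith)]
  nlinarith [le_abs_self a, le_abs_self b, abs_nonneg a, abs_nonneg b]

theorem tendsto_div_rpow_of_isBigO {α : Type*} {l : Filter α} {f g : α → ℝ} {p : ℝ} (hp : 1 < p)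
    (hfg : f =O[l] g) (hg : Tendsto g l atTop) : Tendsto (fun x => f x / g x ^ p) l (𝓝 0) := by
  have hdecay : Tendsto (fun x => g x ^ (-(p - 1))) l (𝓝 0) :=
    (tendsto_rpow_neg_atTop (by linarith)).comp hg
  refine IsBigO.trans_tendsto ?_ hdecay
  refine (hfg.mul (isBigO_refl (fun x => (g x ^ p)⁻¹) l)).congr' (.of_forall fun x => ?_) ?_
  · exact (div_eq_mul_inv _ _).symm
  · filter_upwards [hg.eventually_gt_atTop 0] with x hx
    rw [Real.rpow_neg hx.le, Real.rpow_sub hx, Real.rpow_one, inv_div, div_eq_mul_inv]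

/-- For `n ≥ 2`, `p ∈ (1, n]`, if `Q ≥ 0` is integrable on a ball
`B(x0, r0)` in `ℝⁿ` and has finite mean oscillation at `x0`, then there exists
`ε0 ∈ (0, min(r0, 1/e))` such that, with
`F(ε) = ∫_{ε < |x−x0| < ε0} Q(x)/(|x−x0|·log(1/|x−x0|))ⁿ dx` and
`I(ε) = ∫_ε^{ε0} dt/(t·log(1/t))^{n/p}`, one has `F(ε)/I(ε)^p → 0` as `ε → 0⁺`. -/
theorem fmo_little_o_estimate (n : ℕ) (hn : 2 ≤ n) (p : ℝ) (hp₁ : 1 < p) (hp₂ : p ≤ (n : ℝ))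
    (x0 : EuclideanSpace ℝ (Fin n)) (Q : EuclideanSpace ℝ (Fin n) → ℝ) (hQ0 : ∀ x, 0 ≤ Q x)
    (r0 : ℝ) (hr0 : 0 < r0) (hQint : IntegrableOn Q (ball x0 r0))
    (hFMO : ∃ M : ℝ, ∀ᶠ ε in 𝓝[>] (0 : ℝ),
      ⨍ x in ball x0 ε, |Q x - ⨍ y in ball x0 ε, Q y| ≤ M) :
    ∃ ε0 ∈ Set.Ioo 0 (min r0 (1 / Real.exp 1)),
      Tendsto (fun ε : ℝ =>
          (∫ x in {x | dist x x0 ∈ Set.Ioo ε ε0},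
              Q x / (dist x x0 * Real.log (1 / dist x x0)) ^ n) /
            (∫ t in Set.Ioo ε ε0, 1 / (t * Real.log (1 / t)) ^ ((n : ℝ) / p)) ^ p)
        (𝓝[>] (0 : ℝ)) (𝓝 0) := by
  obtain ⟨ε0, ⟨C, hball⟩, hε0⟩ := ((eventually_exists_setIntegral_ball_div_two_pow_le hr0 hQ0
    hQint hFMO).and (Ioo_mem_nhdsGT (lt_min hr0 (by positivity : 0 < 1 / exp 1)))).exists
  simp only [finrank_euclideanSpace_fin] at hball
  refine ⟨ε0, hε0, ?_⟩
  obtain ⟨hε0pos, hε0r0, hε0e⟩ : 0 < ε0 ∧ ε0 < r0 ∧ ε0 < 1 / exp 1 := by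
    simpa only [Set.mem_Ioo, lt_min_iff] using hε0
  have hQε0 : IntegrableOn Q (ball x0 ε0) := hQint.mono_set (ball_subset_ball hε0r0.le)
  have hε0one : ε0 < 1 :=
    hε0e.trans ((div_lt_one (exp_pos 1)).mpr (by linarith [add_one_lt_exp one_ne_zero]))
  set F := fun ε : ℝ => ∫ x in {x | dist x x0 ∈ Set.Ioo ε ε0},
    Q x / (dist x x0 * log (1 / dist x x0)) ^ n
  set I := fun ε : ℝ => ∫ t in Set.Ioo ε ε0, 1 / (t * log (1 / t)) ^ ((n : ℝ) / p)
  set ℓ := fun ε : ℝ => log (log (1 / ε))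
  have hsmall : Set.Ioo 0 ε0 ∈ 𝓝[>] (0 : ℝ) := Ioo_mem_nhdsGT hε0pos
  have hℓ : Tendsto ℓ (𝓝[>] 0) atTop :=
    tendsto_log_atTop.comp (tendsto_log_atTop.comp
      (tendsto_inv_nhdsGT_zero.congr fun ε => (one_div ε).symm))
  have hI : ∀ ε ∈ Set.Ioo 0 ε0, ℓ ε - ℓ ε0 ≤ I ε := fun ε hε =>
    log_log_one_div_sub_le_integral hε.1 hε.2.le (by linarith) (by rwa [one_le_div (by linarith)])
  have hItop : Tendsto I (𝓝[>] 0) atTop :=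
    tendsto_atTop_mono' _ (eventually_of_mem hsmall hI) (tendsto_atTop_add_const_right _ _ hℓ)
  have hFℓ : F =O[𝓝[>] 0] ℓ := isBigO_of_le_const_add_mul hℓ
    (.of_forall fun ε => setIntegral_div_dist_mul_log_pow_Ioo_nonneg hQ0 (by linarith) ε)
    (eventually_of_mem hsmall fun ε hε =>
      setIntegral_div_dist_mul_log_pow_Ioo_le hn hε0pos hε0e hQ0 hQε0 hball hε)
  have hℓI : ℓ =O[𝓝[>] 0] I := isBigO_of_le_const_add_mul (a := ℓ ε0) (b := 1) hItop
    (hℓ.eventually_ge_atTop 0) (eventually_of_mem hsmall fun ε hε => by linarith [hI ε hε])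
  exact tendsto_div_rpow_of_isBigO hp₁ (hFℓ.trans hℓI) hItop
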